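/- arXiv:1402.2952 — 2 statements merged into one kernel-verified Lean document; each statement's English description precedes it below -/
import Mathlib

section
/- Let H be a real Hilbert space, V a closed subspace with dim V ≥ 2 and P : H → V the orthogonal projection. Let v ∈ H with v ≠ 0 and ∠(v,V⊥) > 0 (i.e. Pv ≠ 0), and let ε ∈ (0, 1]. Then there exists u ∈ H such that Pu ≠ 0, ⟨u, v⟩ ≥ cos∠(v,V⊥) · ‖u‖‖v‖, and ⟨Pu, Pv⟩ = ε‖Pu‖‖Pv‖. -/
/-!
Write `p = Pv` and `w = v - p ∈ V⊥`, so that `cos ∠(v,V⊥) = ‖w‖ / ‖v‖` and `∠(v,V⊥) > 0` means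
`p ≠ 0`. Since `dim V ≥ 2` there is a unit vector `a ∈ V` with `⟪a, p⟫ = ε ‖p‖`. Every
`u = a + t w` has `Pu = a`, which settles the last condition, and for `t = 1 / (2 ε ‖p‖)` the
inequality `‖w‖ ‖u‖ ≤ ⟪u, v⟫` reduces, after squaring, to `‖w‖² ‖a‖² ≤ (ε ‖p‖)² + ‖w‖²`.
-/

open scoped RealInnerProductSpace

section

variable {E : Type*} [NormedAddCommGroup E] [InnerProductSpace ℝ E]

theorem exists_norm_eq_one_inner_eq_zero (hE : 2 ≤ Module.rank ℝ E) (p : E) :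
    ∃ z : E, ‖z‖ = 1 ∧ ⟪z, p⟫ = 0 := by
  have hne : (ℝ ∙ p)ᗮ ≠ ⊥ := by
    intro h
    have hle : Module.rank ℝ (ℝ ∙ p) ≤ 1 := by
      simpa using rank_span_le (R := ℝ) ({p} : Set E)
    rw [Submodule.orthogonal_eq_bot_iff.1 h, rank_top] at hle
    exact absurd (hE.trans hle) (by norm_num)
  obtain ⟨z, hz, hz0⟩ := Submodule.exists_mem_ne_zero_of_ne_bot hne
  refine ⟨‖z‖⁻¹ • z, norm_smul_inv_norm hz0, ?_⟩
  rw [real_inner_smul_left, Submodule.mem_orthogonal_singleton_iff_inner_left.1 hz, mul_zero]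

theorem exists_norm_eq_one_inner_eq_mul_norm (hE : 2 ≤ Module.rank ℝ E) {p : E} (hp : p ≠ 0)
    {ε : ℝ} (hε : |ε| ≤ 1) : ∃ a : E, ‖a‖ = 1 ∧ ⟪a, p⟫ = ε * ‖p‖ := by
  obtain ⟨z, hz, hzp⟩ := exists_norm_eq_one_inner_eq_zero hE p
  have hp' : ‖p‖ ≠ 0 := norm_ne_zero_iff.2 hp
  have hc : √(1 - ε ^ 2) ^ 2 = 1 - ε ^ 2 := Real.sq_sqrt (by nlinarith [sq_abs ε, abs_nonneg ε])
  refine ⟨(ε / ‖p‖) • p + √(1 - ε ^ 2) • z, ?_, ?_⟩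
  · rw [← pow_eq_one_iff_of_nonneg (norm_nonneg _) two_ne_zero, norm_add_sq_real, norm_smul,
      norm_smul, real_inner_smul_left, real_inner_smul_right, real_inner_comm, hzp, hz, mul_pow,
      mul_pow, Real.norm_eq_abs, Real.norm_eq_abs, sq_abs, sq_abs, hc, div_pow]
    field_simp
    ring
  · rw [inner_add_left, real_inner_smul_left, real_inner_smul_left, hzp,
      real_inner_self_eq_norm_sq, mul_zero, add_zero]
    field_simp

theorem norm_mul_norm_add_smul_le_inner {a p w : E} {c : ℝ} (hc : 0 < c) (ha : ‖a‖ ≤ 1)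
    (hap : ⟪a, p⟫ = c) (haw : ⟪a, w⟫ = 0) (hwp : ⟪w, p⟫ = 0) :
    ‖w‖ * ‖a + (2 * c)⁻¹ • w‖ ≤ ⟪a + (2 * c)⁻¹ • w, p + w⟫ := by
  set t := (2 * c)⁻¹
  have ht : 2 * c * t = 1 := mul_inv_cancel₀ (by positivity)
  have hinner : ⟪a + t • w, p + w⟫ = c + t * ‖w‖ ^ 2 := by
    rw [inner_add_left, inner_add_right, inner_add_right, real_inner_smul_left,
      real_inner_smul_left, hap, haw, hwp, real_inner_self_eq_norm_sq]
    ring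
  have hnorm : ‖a + t • w‖ ^ 2 = ‖a‖ ^ 2 + t ^ 2 * ‖w‖ ^ 2 := by
    rw [norm_add_sq_real, real_inner_smul_right, haw, norm_smul, Real.norm_eq_abs, mul_pow,
      sq_abs]
    ring
  rw [hinner]
  refine le_of_sq_le_sq ?_ (by positivity)
  rw [mul_pow, hnorm]
  nlinarith [sq_nonneg c, sq_nonneg ‖w‖, pow_le_one₀ (norm_nonneg a) ha (n := 2)]

end

theorem stmt3_general {H : Type*} [NormedAddCommGroup H] [InnerProductSpace ℝ H]
    (V : Submodule ℝ H) [CompleteSpace V] (hV : 2 ≤ Module.rank ℝ V)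
    (v : H) (hv : v ≠ 0)
    (ψ : ℝ) (hψ : ψ = Real.arccos (‖v - (V.orthogonalProjection v : H)‖ / ‖v‖))
    (hψ0 : 0 < ψ)
    (ε : ℝ) (hε0 : 0 < ε) (hε1 : ε ≤ 1) :
    ∃ u : H, (V.orthogonalProjection u : H) ≠ 0 ∧
      ⟪u, v⟫ ≥ Real.cos ψ * (‖u‖ * ‖v‖) ∧
      ⟪(V.orthogonalProjection u : H), (V.orthogonalProjection v : H)⟫ =
        ε * (‖(V.orthogonalProjection u : H)‖ * ‖(V.orthogonalProjection v : H)‖) := by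
  set p := V.orthogonalProjectionOnto v
  set w := v - (p : H)
  have hw : w ∈ Vᗮ := V.sub_starProjection_mem_orthogonal v
  have hv0 : 0 < ‖v‖ := norm_pos_iff.2 hv
  have hwv : ‖w‖ < ‖v‖ := by rwa [hψ, Real.arccos_pos, div_lt_one hv0] at hψ0
  have hp : p ≠ 0 := fun hp ↦ by simp [w, hp] at hwv
  have hcos : Real.cos ψ = ‖w‖ / ‖v‖ := by
    rw [hψ, Real.cos_arccos (by linarith [div_nonneg (norm_nonneg w) hv0.le])
      ((div_le_one hv0).2 hwv.le)]
  obtain ⟨a, ha, hap⟩ := exists_norm_eq_one_inner_eq_mul_norm hV hp (abs_le.2 ⟨by linarith, hε1⟩)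
  set u := (a : H) + (2 * (ε * ‖p‖))⁻¹ • w
  have hPu : V.orthogonalProjectionOnto u = a := by
    rw [map_add, map_smul, V.orthogonalProjectionOnto_apply_of_mem_orthogonal hw, smul_zero,
      add_zero, V.orthogonalProjectionOnto_mem_subspace_eq_self]
  refine ⟨u, ?_, ?_, ?_⟩
  · rw [hPu]
    exact_mod_cast ne_zero_of_norm_ne_zero (ha ▸ one_ne_zero)
  · have hlhs : Real.cos ψ * (‖u‖ * ‖v‖) = ‖w‖ * ‖u‖ := by
      rw [hcos]
      field_simp
    have hvpw : v = p + w := (add_sub_cancel _ _).symm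
    rw [hlhs, ge_iff_le, hvpw]
    refine norm_mul_norm_add_smul_le_inner (by positivity) ha.le ?_
      (V.inner_right_of_mem_orthogonal a.2 hw) (V.inner_left_of_mem_orthogonal p.2 hw)
    rw [← V.coe_inner, hap]
  · rw [hPu, ← Submodule.coe_inner, ← Submodule.coe_norm, ← Submodule.coe_norm, hap, ha, one_mul]

/-- If `dim V ≥ 2`, `v ≠ 0` with `∠(v,V⊥) > 0` and `ε ∈ (0,1]`, then there
exists `u` with `P u ≠ 0`, `⟨u,v⟩ ≥ cos ∠(v,V⊥) ‖u‖ ‖v‖` and `⟨P u, P v⟩ = ε ‖P u‖ ‖P v‖`. -/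
theorem stmt3 {H : Type*} [NormedAddCommGroup H] [InnerProductSpace ℝ H] [CompleteSpace H]
    (V : Submodule ℝ H) [CompleteSpace V] (hV : 2 ≤ Module.rank ℝ V)
    (v : H) (hv : v ≠ 0)
    (ψ : ℝ) (hψ : ψ = Real.arccos (‖v - (V.orthogonalProjection v : H)‖ / ‖v‖))
    (hψ0 : 0 < ψ)
    (ε : ℝ) (hε0 : 0 < ε) (hε1 : ε ≤ 1) :
    ∃ u : H, (V.orthogonalProjection u : H) ≠ 0 ∧
      ⟪u, v⟫ ≥ Real.cos ψ * (‖u‖ * ‖v‖) ∧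
      ⟪(V.orthogonalProjection u : H), (V.orthogonalProjection v : H)⟫ =
        ε * (‖(V.orthogonalProjection u : H)‖ * ‖(V.orthogonalProjection v : H)‖) :=
  stmt3_general V hV v hv ψ hψ hψ0 ε hε0 hε1
end

section
/- Let H be a real Hilbert space, V a closed subspace of H with V ≠ H and V ≠ {0}, and P : H → V the orthogonal projection. Let v ∈ H with 0 < ∠(v,V⊥) < π/2 (equivalently Pv ≠ 0 and v − Pv ≠ 0). Then for all u ∈ H, if ⟨u, v⟩ ≥ cos∠(v,V⊥) · ‖u‖‖v‖ and Pu ≠ 0, then ⟨Pu, Pv⟩ > 0. -/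
/-!
Split `u = Pu + (u - Pu)` and `v = Pv + (v - Pv)` orthogonally, so that
`⟪u, v⟫ = ⟪Pu, Pv⟫ + ⟪u - Pu, v - Pv⟫`. The cosine of `∠(v, V⊥)` is `‖v - Pv‖ / ‖v‖`, so the
hypothesis on `u` reads `‖u‖ ‖v - Pv‖ ≤ ⟪u, v⟫`. By Cauchy–Schwarz the second summand is at most
`‖u - Pu‖ ‖v - Pv‖`, which is strictly smaller than `‖u‖ ‖v - Pv‖` because `Pu ≠ 0` and
`v - Pv ≠ 0`; hence `⟪Pu, Pv⟫ > 0`.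
-/

open scoped RealInnerProductSpace InnerProductSpace

namespace Submodule

section RCLike

variable {𝕜 E : Type*} [RCLike 𝕜] [NormedAddCommGroup E] [InnerProductSpace 𝕜 E]
  (K : Submodule 𝕜 E) [K.HasOrthogonalProjection]

theorem inner_eq_inner_starProjection_add_inner_sub_starProjection (u v : E) :
    ⟪u, v⟫_𝕜 = ⟪K.starProjection u, K.starProjection v⟫_𝕜 +
      ⟪u - K.starProjection u, v - K.starProjection v⟫_𝕜 := by
  have hleft : ⟪u - K.starProjection u, K.starProjection v⟫_𝕜 = 0 :=
    K.starProjection_inner_eq_zero u _ (K.starProjection_apply_mem v)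
  have hright : ⟪K.starProjection u, v - K.starProjection v⟫_𝕜 = 0 :=
    inner_eq_zero_symm.mp (K.starProjection_inner_eq_zero v _ (K.starProjection_apply_mem u))
  conv_lhs => rw [← add_sub_cancel (K.starProjection u) u, ← add_sub_cancel (K.starProjection v) v]
  rw [inner_add_left, inner_add_right, inner_add_right, hleft, hright]
  ring

theorem norm_sub_starProjection_lt_norm {u : E} (hu : K.starProjection u ≠ 0) :
    ‖u - K.starProjection u‖ < ‖u‖ := by
  have hpyth := K.norm_sq_eq_add_norm_sq_starProjection u
  rw [starProjection_orthogonal_val] at hpyth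
  have : 0 < ‖K.starProjection u‖ ^ 2 := by positivity
  exact (pow_lt_pow_iff_left₀ (norm_nonneg _) (norm_nonneg _) two_ne_zero).mp (by linarith)

theorem norm_sub_starProjection_le_norm (u : E) : ‖u - K.starProjection u‖ ≤ ‖u‖ := by
  simpa using Kᗮ.norm_starProjection_apply_le u

end RCLike

variable {H : Type*} [NormedAddCommGroup H] [InnerProductSpace ℝ H]
  {V : Submodule ℝ H} [V.HasOrthogonalProjection]

theorem inner_starProjection_pos_of_norm_mul_norm_sub_le_inner {u v : H}
    (hu : V.starProjection u ≠ 0) (hv : v - V.starProjection v ≠ 0)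
    (h : ‖u‖ * ‖v - V.starProjection v‖ ≤ ⟪u, v⟫) :
    0 < ⟪V.starProjection u, V.starProjection v⟫ := by
  have hlt : ⟪u - V.starProjection u, v - V.starProjection v⟫ < ‖u‖ * ‖v - V.starProjection v‖ :=
    calc ⟪u - V.starProjection u, v - V.starProjection v⟫
        ≤ ‖u - V.starProjection u‖ * ‖v - V.starProjection v‖ := real_inner_le_norm _ _
      _ < ‖u‖ * ‖v - V.starProjection v‖ :=
        mul_lt_mul_of_pos_right (V.norm_sub_starProjection_lt_norm hu) (norm_pos_iff.mpr hv)
  linarith [V.inner_eq_inner_starProjection_add_inner_sub_starProjection u v]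

theorem cos_arccos_norm_sub_starProjection_div_norm_mul_norm (v : H) :
    Real.cos (Real.arccos (‖v - V.starProjection v‖ / ‖v‖)) * ‖v‖ = ‖v - V.starProjection v‖ := by
  rcases eq_or_ne v 0 with rfl | hv
  · simp
  have hv' : 0 < ‖v‖ := norm_pos_iff.mpr hv
  rw [Real.cos_arccos (by linarith [div_nonneg (norm_nonneg (v - V.starProjection v)) hv'.le])
    ((div_le_one hv').mpr (V.norm_sub_starProjection_le_norm v)), div_mul_cancel₀ _ hv'.ne']

end Submodule

theorem stmt5_general {H : Type*} [NormedAddCommGroup H] [InnerProductSpace ℝ H]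
    (V : Submodule ℝ H) [CompleteSpace V]
    (v : H)
    (ψ : ℝ) (hψ : ψ = Real.arccos (‖v - (V.orthogonalProjection v : H)‖ / ‖v‖))
    (hψ2 : ψ < Real.pi / 2) :
    ∀ u : H, ⟪u, v⟫ ≥ Real.cos ψ * (‖u‖ * ‖v‖) →
      (V.orthogonalProjection u : H) ≠ 0 →
      0 < ⟪(V.orthogonalProjection u : H), (V.orthogonalProjection v : H)⟫ := by
  intro u hu hPu
  simp only [Submodule.coe_orthogonalProjectionOnto_apply] at hψ hPu ⊢
  have hr : 0 < ‖v - V.starProjection v‖ / ‖v‖ := Real.arccos_lt_pi_div_two.mp (hψ ▸ hψ2)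
  have hq : v - V.starProjection v ≠ 0 := fun h ↦ by simp [h] at hr
  refine Submodule.inner_starProjection_pos_of_norm_mul_norm_sub_le_inner hPu hq ?_
  calc ‖u‖ * ‖v - V.starProjection v‖
      = Real.cos ψ * (‖u‖ * ‖v‖) := by
        rw [hψ, mul_left_comm, Submodule.cos_arccos_norm_sub_starProjection_div_norm_mul_norm]
    _ ≤ ⟪u, v⟫ := hu

/-- If `V ≠ H`, `V ≠ {0}` and `0 < ∠(v,V⊥) < π/2`, then for all `u`,
if `⟨u,v⟩ ≥ cos ∠(v,V⊥) ‖u‖ ‖v‖` and `P u ≠ 0` then `⟨P u, P v⟩ > 0`. -/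
theorem stmt5 {H : Type*} [NormedAddCommGroup H] [InnerProductSpace ℝ H] [CompleteSpace H]
    (V : Submodule ℝ H) [CompleteSpace V] (hV1 : V ≠ ⊤) (hV2 : V ≠ ⊥)
    (v : H)
    (ψ : ℝ) (hψ : ψ = Real.arccos (‖v - (V.orthogonalProjection v : H)‖ / ‖v‖))
    (hψ0 : 0 < ψ) (hψ2 : ψ < Real.pi / 2) :
    ∀ u : H, ⟪u, v⟫ ≥ Real.cos ψ * (‖u‖ * ‖v‖) →
      (V.orthogonalProjection u : H) ≠ 0 →
      0 < ⟪(V.orthogonalProjection u : H), (V.orthogonalProjection v : H)⟫ :=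
  stmt5_general V v ψ hψ hψ2
end
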